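/- Let A, B be real symmetric n×n matrices with ‖A‖ ≤ 2.5 (operator norm). For η > 0 let Γ be the counterclockwise rectangular contour with vertices ±3 ± iη/2. Then the GRAMPA similarity matrix X = Σ_{i,j} [η/((λᵢ - μⱼ)² + η²)] vᵢ vᵢᵀ J wⱼ wⱼᵀ admits the resolvent representation X = (1/2π) Re ∮_Γ R_A(z) J R_B(z + iη) dz. -/

import Mathlib

/-!
Since `|λᵢ| ≤ ‖A‖ < 3` and `μⱼ - iη` lies below the rectangle, neither resolvent is singular on `Γ`,
and there the spectral decompositions give
`R_A(z) J R_B(z + iη) = Σᵢⱼ (λᵢ - z)⁻¹ (μⱼ - iη - z)⁻¹ vᵢvᵢᵀ J wⱼwⱼᵀ`. By partial fractions each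
scalar coefficient splits into `(λᵢ - z)⁻¹`, whose integral over `Γ` is `-2πi`, and
`(μⱼ - iη - z)⁻¹`, whose integral vanishes by Cauchy's theorem. What remains is
`2πi / (λᵢ - μⱼ + iη)`, with real part `2πη / ((λᵢ - μⱼ)² + η²)`.
-/
open Matrix Complex intervalIntegral

/-- Counterclockwise contour integral of `f` over the rectangle with vertices
`±3 ± i η/2`. -/
noncomputable def rectIntegral (η : ℝ) (f : ℂ → ℂ) : ℂ :=
  (∫ t in (-3 : ℝ)..3, f ((t : ℂ) - ((η / 2 : ℝ) : ℂ) * Complex.I))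
    + Complex.I * (∫ t in (-(η / 2))..(η / 2), f ((3 : ℂ) + (t : ℂ) * Complex.I))
    - (∫ t in (-3 : ℝ)..3, f ((t : ℂ) + ((η / 2 : ℝ) : ℂ) * Complex.I))
    - Complex.I * (∫ t in (-(η / 2))..(η / 2), f ((-3 : ℂ) + (t : ℂ) * Complex.I))

open scoped Real

namespace Matrix

theorem vecMulVec_self_mul_vecMulVec_self {R ι m : Type*} [CommRing R] [DecidableEq ι] [Fintype m]
    {v : ι → m → R} (hv : ∀ i j, v i ⬝ᵥ v j = if i = j then 1 else 0) (i j : ι) :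
    vecMulVec (v i) (v i) * vecMulVec (v j) (v j) =
      if i = j then vecMulVec (v i) (v i) else 0 := by
  rw [vecMulVec_mul_vecMulVec, hv]
  split_ifs with h
  · rw [h, one_smul]
  · ext; simp

theorem sum_vecMulVec_self_eq_one {R ι : Type*} [CommRing R] [Fintype ι] [DecidableEq ι]
    {v : ι → ι → R} (hv : ∀ i j, v i ⬝ᵥ v j = if i = j then 1 else 0) :
    ∑ i, vecMulVec (v i) (v i) = 1 := by
  have hrows : of v * (of v)ᵀ = 1 := by
    ext i j
    simpa [mul_apply, one_apply, dotProduct] using hv i j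
  have hcols := mul_eq_one_comm.mp hrows
  ext a b
  simpa [mul_apply, sum_apply, vecMulVec_apply] using congrFun (congrFun hcols a) b

theorem mulVec_eq_smul_of_eq_sum_smul_vecMulVec {R ι m : Type*} [CommRing R] [Fintype ι]
    [DecidableEq ι] [Fintype m] {A : Matrix m m R} {lam : ι → R} {v : ι → m → R}
    (hv : ∀ i j, v i ⬝ᵥ v j = if i = j then 1 else 0)
    (hA : A = ∑ i, lam i • vecMulVec (v i) (v i)) (i : ι) :
    A *ᵥ v i = lam i • v i := by
  simp [hA, sum_mulVec, smul_mulVec, vecMulVec_mulVec, hv]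

theorem inv_sum_smul_sub_smul_one {K ι m : Type*} [Field K] [Fintype ι] [DecidableEq ι]
    [Fintype m] [DecidableEq m] {P : ι → Matrix m m K}
    (hP : ∀ i j, P i * P j = if i = j then P i else 0) (hsum : ∑ i, P i = 1)
    {c : ι → K} {z : K} (hz : ∀ i, c i ≠ z) :
    (∑ i, c i • P i - z • 1)⁻¹ = ∑ i, (c i - z)⁻¹ • P i := by
  have hshift : ∑ i, c i • P i - z • 1 = ∑ i, (c i - z) • P i := by
    simp only [← hsum, Finset.smul_sum, ← Finset.sum_sub_distrib, sub_smul]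
  rw [hshift]
  apply inv_eq_right_inv
  simp only [Finset.sum_mul, Finset.mul_sum, smul_mul_smul_comm, hP, smul_ite, smul_zero]
  simp [mul_inv_cancel₀ (sub_ne_zero.mpr (hz _)), hsum]

theorem map_ofReal_mul {m : Type*} [Fintype m] (M N : Matrix m m ℝ) :
    (M * N).map ofReal = M.map ofReal * N.map ofReal :=
  Matrix.map_mul (f := ofRealHom)

variable {m : Type*} [Fintype m] [DecidableEq m]

theorem inv_map_ofReal_sub_smul_one {A : Matrix m m ℝ} {lam : m → ℝ} {v : m → m → ℝ}
    (hv : ∀ i j, v i ⬝ᵥ v j = if i = j then 1 else 0)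
    (hA : A = ∑ i, lam i • vecMulVec (v i) (v i)) {z : ℂ} (hz : ∀ i, (lam i : ℂ) ≠ z) :
    (A.map ofReal - z • 1)⁻¹ = ∑ i, ((lam i : ℂ) - z)⁻¹ • (vecMulVec (v i) (v i)).map ofReal := by
  have hA' : A.map ofReal = ∑ i, (lam i : ℂ) • (vecMulVec (v i) (v i)).map ofReal := by
    ext a b; simp [hA, sum_apply]
  rw [hA']
  apply inv_sum_smul_sub_smul_one _ _ hz
  · intro i j
    rw [← map_ofReal_mul, vecMulVec_self_mul_vecMulVec_self hv]
    split_ifs <;> simp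
  · ext a b
    simpa [sum_apply, one_apply, apply_ite ofReal] using
      congrArg (fun M : Matrix m m ℝ => (M a b : ℂ)) (sum_vecMulVec_self_eq_one hv)

theorem inv_map_ofReal_sub_smul_one_mul_mul_apply {A B X : Matrix m m ℝ} {lam mu : m → ℝ}
    {v w : m → m → ℝ}
    (hv : ∀ i j, v i ⬝ᵥ v j = if i = j then 1 else 0)
    (hw : ∀ i j, w i ⬝ᵥ w j = if i = j then 1 else 0)
    (hA : A = ∑ i, lam i • vecMulVec (v i) (v i))
    (hB : B = ∑ j, mu j • vecMulVec (w j) (w j)) {z z' : ℂ}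
    (hz : ∀ i, (lam i : ℂ) ≠ z) (hz' : ∀ j, (mu j : ℂ) ≠ z') (a b : m) :
    ((A.map ofReal - z • 1)⁻¹ * X.map ofReal * (B.map ofReal - z' • 1)⁻¹) a b =
      ∑ i, ∑ j, ((vecMulVec (v i) (v i) * X * vecMulVec (w j) (w j)) a b : ℂ) *
        (((lam i : ℂ) - z)⁻¹ * ((mu j : ℂ) - z')⁻¹) := by
  rw [inv_map_ofReal_sub_smul_one hv hA hz, inv_map_ofReal_sub_smul_one hw hB hz']
  simp only [Finset.sum_mul, Finset.mul_sum, smul_mul_assoc, mul_smul_comm,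
    ← map_ofReal_mul, sum_apply, smul_apply, map_apply, smul_eq_mul]
  rw [Finset.sum_comm]
  refine Finset.sum_congr rfl fun i _ => Finset.sum_congr rfl fun j _ => ?_
  ring

end Matrix

theorem ContinuousLinearMap.norm_le_opNorm_of_apply_eq_smul {𝕜 E : Type*}
    [NontriviallyNormedField 𝕜] [NormedAddCommGroup E] [NormedSpace 𝕜 E] (T : E →L[𝕜] E)
    {c : 𝕜} {x : E} (hx : x ≠ 0) (hTx : T x = c • x) : ‖c‖ ≤ ‖T‖ := by
  have h := T.le_opNorm x
  rw [hTx, norm_smul] at h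
  exact le_of_mul_le_mul_right h (norm_pos_iff.mpr hx)

theorem Matrix.abs_le_norm_toEuclideanCLM_of_mulVec_eq_smul {m : Type*} [Fintype m]
    [DecidableEq m] {A : Matrix m m ℝ} {l : ℝ} {u : m → ℝ} (hu : u ≠ 0)
    (hAu : A *ᵥ u = l • u) : |l| ≤ ‖toEuclideanCLM (𝕜 := ℂ) (A.map ofReal)‖ := by
  set x : EuclideanSpace ℂ m := WithLp.toLp 2 (ofReal ∘ u)
  have hx : x ≠ 0 := by
    intro h0
    apply hu
    funext k
    simpa [x] using congrArg (fun y : EuclideanSpace ℂ m => y k) h0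
  have hAx : toEuclideanCLM (𝕜 := ℂ) (A.map ofReal) x = (l : ℂ) • x := by
    rw [toEuclideanCLM_toLp]
    congr 1
    funext k
    have hk := RingHom.map_mulVec ofRealHom A u k
    rw [hAu] at hk
    exact hk.symm.trans (by simp [x])
  simpa using ContinuousLinearMap.norm_le_opNorm_of_apply_eq_smul _ hx hAx

theorem Complex.log_neg_of_im_pos {u : ℂ} (hu : 0 < u.im) : log (-u) = log u - π * I := by
  apply Complex.ext <;> simp [log_re, log_im, arg_neg_eq_arg_sub_pi_of_im_pos hu]

theorem Complex.log_neg_of_im_neg {u : ℂ} (hu : u.im < 0) : log (-u) = log u + π * I := by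
  apply Complex.ext <;> simp [log_re, log_im, arg_neg_eq_arg_add_pi_of_im_neg hu]

theorem integral_inv_add_mul {a b : ℝ} {c m : ℂ} (hm : m ≠ 0)
    (hslit : ∀ t ∈ Set.uIcc a b, c + t * m ∈ slitPlane) :
    ∫ t in a..b, (c + t * m)⁻¹ = m⁻¹ * (log (c + b * m) - log (c + a * m)) := by
  have hderiv : ∀ t ∈ Set.uIcc a b,
      HasDerivAt (fun t : ℝ => m⁻¹ * log (c + t * m)) (c + t * m)⁻¹ t := by
    intro t ht
    have hlin : HasDerivAt (fun w : ℂ => c + w * m) m t := by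
      simpa using ((hasDerivAt_id (t : ℂ)).mul_const m).const_add c
    have hlog := ((hasDerivAt_log (hslit t ht)).comp (t : ℂ) hlin).const_mul m⁻¹
    rw [mul_left_comm, inv_mul_cancel₀ hm, mul_one] at hlog
    exact hlog.comp_ofReal
  rw [integral_eq_sub_of_hasDerivAt hderiv, mul_sub]
  refine ContinuousOn.intervalIntegrable (ContinuousOn.inv₀ (by fun_prop) ?_)
  exact fun t ht => slitPlane_ne_zero (hslit t ht)

section RectIntegral

variable {η : ℝ}

def rectBoundary (η : ℝ) : Set ℂ :=
  (fun t : ℝ => (t : ℂ) - ((η / 2 : ℝ) : ℂ) * I) '' Set.uIcc (-3) 3 ∪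
  (fun t : ℝ => (3 : ℂ) + (t : ℂ) * I) '' Set.uIcc (-(η / 2)) (η / 2) ∪
  (fun t : ℝ => (t : ℂ) + ((η / 2 : ℝ) : ℂ) * I) '' Set.uIcc (-3) 3 ∪
  (fun t : ℝ => (-3 : ℂ) + (t : ℂ) * I) '' Set.uIcc (-(η / 2)) (η / 2)

def closedRect (η : ℝ) : Set ℂ := Set.uIcc (-3) 3 ×ℂ Set.uIcc (-(η / 2)) (η / 2)

theorem rectBoundary_subset_closedRect : rectBoundary η ⊆ closedRect η := by
  rintro _ (((⟨t, ht, rfl⟩ | ⟨t, ht, rfl⟩) | ⟨t, ht, rfl⟩) | ⟨t, ht, rfl⟩) <;>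
    simp_all [closedRect, Complex.mem_reProdIm]

theorem ofReal_mem_closedRect {l : ℝ} (hl : |l| ≤ 3) : (l : ℂ) ∈ closedRect η := by
  obtain ⟨hl₁, hl₂⟩ := abs_le.mp hl
  simpa [closedRect, Complex.mem_reProdIm, Set.mem_uIcc, hl₁, hl₂] using le_total 0 (η / 2)

theorem ofReal_notMem_rectBoundary (hη : η ≠ 0) {l : ℝ} (hl : |l| < 3) :
    (l : ℂ) ∉ rectBoundary η := by
  obtain ⟨hl₁, hl₂⟩ := abs_lt.mp hl
  rintro (((⟨t, -, ht⟩ | ⟨t, -, ht⟩) | ⟨t, -, ht⟩) | ⟨t, -, ht⟩)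
  · simpa [hη] using congrArg im ht
  · have := congrArg re ht; simp at this; linarith
  · simpa [hη] using congrArg im ht
  · have := congrArg re ht; simp at this; linarith

theorem continuousOn_inv_sub_rectBoundary {p : ℂ} (hp : p ∉ rectBoundary η) :
    ContinuousOn (fun z => (p - z)⁻¹) (rectBoundary η) :=
  (continuousOn_const.sub continuousOn_id).inv₀ fun z hz h0 => hp ((sub_eq_zero.mp h0 : p = z) ▸ hz)

def RectIntegrable (η : ℝ) (f : ℂ → ℂ) : Prop :=
  IntervalIntegrable (fun t : ℝ => f ((t : ℂ) - ((η / 2 : ℝ) : ℂ) * I))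
    MeasureTheory.volume (-3) 3 ∧
  IntervalIntegrable (fun t : ℝ => f ((3 : ℂ) + (t : ℂ) * I))
    MeasureTheory.volume (-(η / 2)) (η / 2) ∧
  IntervalIntegrable (fun t : ℝ => f ((t : ℂ) + ((η / 2 : ℝ) : ℂ) * I))
    MeasureTheory.volume (-3) 3 ∧
  IntervalIntegrable (fun t : ℝ => f ((-3 : ℂ) + (t : ℂ) * I))
    MeasureTheory.volume (-(η / 2)) (η / 2)

theorem ContinuousOn.rectIntegrable {f : ℂ → ℂ} (hf : ContinuousOn f (rectBoundary η)) :
    RectIntegrable η f := by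
  have side : ∀ {γ : ℝ → ℂ} {a b : ℝ}, Continuous γ → γ '' Set.uIcc a b ⊆ rectBoundary η →
      IntervalIntegrable (fun t => f (γ t)) MeasureTheory.volume a b := fun hγ hsub =>
    ((hf.mono hsub).comp hγ.continuousOn (Set.mapsTo_image _ _)).intervalIntegrable
  exact ⟨side (by fun_prop) fun _ hx => .inl (.inl (.inl hx)),
    side (by fun_prop) fun _ hx => .inl (.inl (.inr hx)),
    side (by fun_prop) fun _ hx => .inl (.inr hx), side (by fun_prop) fun _ hx => .inr hx⟩

theorem rectIntegral_congr {f g : ℂ → ℂ} (h : Set.EqOn f g (rectBoundary η)) :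
    rectIntegral η f = rectIntegral η g := by
  have side : ∀ {γ : ℝ → ℂ} {a b : ℝ}, γ '' Set.uIcc a b ⊆ rectBoundary η →
      ∫ t in a..b, f (γ t) = ∫ t in a..b, g (γ t) := fun hsub =>
    integral_congr fun t ht => h (hsub (Set.mem_image_of_mem _ ht))
  unfold rectIntegral
  rw [side fun _ hx => .inl (.inl (.inl hx)), side fun _ hx => .inl (.inl (.inr hx)),
    side fun _ hx => .inl (.inr hx), side fun _ hx => .inr hx]

theorem rectIntegral_const_mul (c : ℂ) (f : ℂ → ℂ) :
    rectIntegral η (fun z => c * f z) = c * rectIntegral η f := by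
  simp only [rectIntegral, integral_const_mul]
  ring

theorem rectIntegral_sub {f g : ℂ → ℂ} (hf : RectIntegrable η f) (hg : RectIntegrable η g) :
    rectIntegral η (fun z => f z - g z) = rectIntegral η f - rectIntegral η g := by
  simp only [rectIntegral, integral_sub hf.1 hg.1, integral_sub hf.2.1 hg.2.1,
    integral_sub hf.2.2.1 hg.2.2.1, integral_sub hf.2.2.2 hg.2.2.2]
  ring

theorem rectIntegral_sum {ι : Type*} (s : Finset ι) {f : ι → ℂ → ℂ}
    (hf : ∀ i ∈ s, RectIntegrable η (f i)) :
    rectIntegral η (fun z => ∑ i ∈ s, f i z) = ∑ i ∈ s, rectIntegral η (f i) := by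
  simp only [rectIntegral, integral_finsetSum fun i hi => (hf i hi).1,
    integral_finsetSum fun i hi => (hf i hi).2.1, integral_finsetSum fun i hi => (hf i hi).2.2.1,
    integral_finsetSum fun i hi => (hf i hi).2.2.2, Finset.sum_sub_distrib, Finset.sum_add_distrib,
    Finset.mul_sum]

theorem rectIntegral_eq_zero_of_differentiableOn {f : ℂ → ℂ}
    (hf : DifferentiableOn ℂ f (closedRect η)) : rectIntegral η f = 0 := by
  have h := integral_boundary_rect_eq_zero_of_differentiableOn f ⟨-3, -(η / 2)⟩ ⟨3, η / 2⟩ hf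
  simp only [smul_eq_mul, ofReal_neg] at h
  rw [rectIntegral, ← h]
  simp only [sub_eq_add_neg, neg_mul, ofReal_ofNat]
  ring

theorem rectIntegral_inv_sub_eq_zero {p : ℂ} (hp : p ∉ closedRect η) :
    rectIntegral η (fun z => (p - z)⁻¹) = 0 :=
  rectIntegral_eq_zero_of_differentiableOn <|
    ((differentiableOn_const p).sub differentiableOn_id).inv fun z hz h0 =>
      hp ((sub_eq_zero.mp h0 : p = z) ▸ hz)

theorem rectIntegral_inv_ofReal_sub (hη : 0 < η) {l : ℝ} (hl : |l| < 3) :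
    rectIntegral η (fun z => ((l : ℂ) - z)⁻¹) = -(2 * π * I) := by
  obtain ⟨hl₁, hl₂⟩ := abs_lt.mp hl
  have hh : (η / 2 : ℝ) ≠ 0 := by positivity
  -- Each side is integrated via a principal logarithm (`integral_inv_add_mul`). At the corners
  -- `z = 3 ∓ iη/2` the values `l - z = -q, -p` lie on opposite sides of the branch cut of `log`,
  -- and its two jumps by `πi` make up the `-2πi`.
  set h : ℂ := ((η / 2 : ℝ) : ℂ)
  set p : ℂ := ((3 - l : ℝ) : ℂ) + h * I
  set q : ℂ := ((3 - l : ℝ) : ℂ) - h * I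
  set u : ℂ := ((3 + l : ℝ) : ℂ) + h * I
  set u' : ℂ := ((3 + l : ℝ) : ℂ) - h * I
  have hbottom : ∫ t in (-3 : ℝ)..3, ((l : ℂ) - (t - h * I))⁻¹ = log u - log (-q) := by
    rw [integral_congr (g := fun t : ℝ => ((l + h * I) + t * (-1))⁻¹) fun t _ => by ring_nf,
      integral_inv_add_mul (by norm_num) fun t _ => Or.inr (by simp [h, hh])]
    simp only [u, q]; push_cast; ring_nf
  have hright : ∫ t in -(η / 2)..(η / 2), ((l : ℂ) - (3 + t * I))⁻¹ = -I⁻¹ * (log p - log q) := by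
    rw [integral_congr (g := fun t : ℝ => -(((3 - l : ℝ) : ℂ) + t * I)⁻¹)
        fun t _ => by simp only; rw [← inv_neg]; push_cast; ring_nf,
      intervalIntegral.integral_neg,
      integral_inv_add_mul I_ne_zero fun t _ => Or.inl (by simp; linarith)]
    simp only [p, q, h]; push_cast; ring_nf
  have htop : ∫ t in (-3 : ℝ)..3, ((l : ℂ) - (t + h * I))⁻¹ = log u' - log (-p) := by
    rw [integral_congr (g := fun t : ℝ => ((l - h * I) + t * (-1))⁻¹) fun t _ => by ring_nf,
      integral_inv_add_mul (by norm_num) fun t _ => Or.inr (by simp [h, hh])]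
    simp only [u', p]; push_cast; ring_nf
  have hleft : ∫ t in -(η / 2)..(η / 2), ((l : ℂ) - (-3 + t * I))⁻¹ = -I⁻¹ * (log u' - log u) := by
    rw [integral_congr (g := fun t : ℝ => (((3 + l : ℝ) : ℂ) + t * (-I))⁻¹)
        fun t _ => by simp only; push_cast; ring_nf,
      integral_inv_add_mul (neg_ne_zero.mpr I_ne_zero) fun t _ => Or.inl (by simp; linarith)]
    simp only [u, u', h]; push_cast; ring_nf
  have hp : 0 < p.im := by simp [p, h]; positivity
  have hq : q.im < 0 := by simp [q, h]; positivity
  rw [rectIntegral, hbottom, hright, htop, hleft, log_neg_of_im_pos hp, log_neg_of_im_neg hq]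
  field_simp
  ring

theorem rectIntegral_inv_ofReal_sub_mul_inv_sub (hη : 0 < η) {l : ℝ} (hl : |l| < 3) {k : ℂ}
    (hk : k ∉ closedRect η) :
    rectIntegral η (fun z => ((l : ℂ) - z)⁻¹ * (k - z)⁻¹) = 2 * π * I / (l - k) := by
  have hl' := ofReal_notMem_rectBoundary hη.ne' hl
  have hk' : k ∉ rectBoundary η := fun h => hk (rectBoundary_subset_closedRect h)
  have hkl : k - l ≠ 0 := sub_ne_zero.mpr fun h => hk (h ▸ ofReal_mem_closedRect hl.le)
  have hpartial : Set.EqOn (fun z => ((l : ℂ) - z)⁻¹ * (k - z)⁻¹)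
      (fun z => (k - l)⁻¹ * (((l : ℂ) - z)⁻¹ - (k - z)⁻¹)) (rectBoundary η) := by
    intro z hz
    have h₁ : (l : ℂ) - z ≠ 0 := sub_ne_zero.mpr fun h => hl' (h ▸ hz)
    have h₂ : k - z ≠ 0 := sub_ne_zero.mpr fun h => hk' (h ▸ hz)
    field_simp
    ring
  rw [rectIntegral_congr hpartial, rectIntegral_const_mul,
    rectIntegral_sub (continuousOn_inv_sub_rectBoundary hl').rectIntegrable
      (continuousOn_inv_sub_rectBoundary hk').rectIntegrable,
    rectIntegral_inv_ofReal_sub hη hl, rectIntegral_inv_sub_eq_zero hk, ← neg_sub k, div_neg]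
  ring

theorem rectIntegral_sum_sum_inv_ofReal_sub_mul_inv_sub {ι κ : Type*} [Fintype ι] [Fintype κ]
    (hη : 0 < η) {l : ι → ℝ} (hl : ∀ i, |l i| < 3) {k : κ → ℂ} (hk : ∀ j, k j ∉ closedRect η)
    (c : ι → κ → ℂ) :
    rectIntegral η (fun z => ∑ i, ∑ j, c i j * (((l i : ℂ) - z)⁻¹ * (k j - z)⁻¹)) =
      ∑ i, ∑ j, c i j * (2 * π * I / (l i - k j)) := by
  have hcont : ∀ i j, ContinuousOn (fun z => c i j * (((l i : ℂ) - z)⁻¹ * (k j - z)⁻¹))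
      (rectBoundary η) := fun i j =>
    continuousOn_const.mul
      ((continuousOn_inv_sub_rectBoundary (ofReal_notMem_rectBoundary hη.ne' (hl i))).mul
        (continuousOn_inv_sub_rectBoundary fun h => hk j (rectBoundary_subset_closedRect h)))
  rw [rectIntegral_sum _ fun i _ => (continuousOn_finsetSum _ fun j _ => hcont i j).rectIntegrable]
  refine Finset.sum_congr rfl fun i _ => ?_
  rw [rectIntegral_sum _ fun j _ => (hcont i j).rectIntegrable]
  refine Finset.sum_congr rfl fun j _ => ?_
  rw [rectIntegral_const_mul, rectIntegral_inv_ofReal_sub_mul_inv_sub hη (hl i) (hk j)]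

end RectIntegral

theorem re_two_pi_I_div_ofReal_sub_sub_mul_I (l m η : ℝ) :
    (2 * π * I / ((l : ℂ) - ((m : ℂ) - η * I))).re = 2 * π * η / ((l - m) ^ 2 + η ^ 2) := by
  simp [div_re, normSq_apply]
  ring

/-- Resolvent representation of the GRAMPA similarity matrix:
if `‖A‖ ≤ 2.5` then `X = (1/2π) Re ∮_Γ R_A(z) J R_B(z + iη) dz`, where `Γ` is the
rectangle with vertices `±3 ± iη/2`. -/
theorem similarity_matrix_resolvent_rep {n : ℕ} (A B : Matrix (Fin n) (Fin n) ℝ)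
    (lam mu : Fin n → ℝ) (v w : Fin n → Fin n → ℝ)
    (hv : ∀ i j, v i ⬝ᵥ v j = if i = j then 1 else 0)
    (hw : ∀ i j, w i ⬝ᵥ w j = if i = j then 1 else 0)
    (hAdec : A = ∑ i, lam i • Matrix.vecMulVec (v i) (v i))
    (hBdec : B = ∑ j, mu j • Matrix.vecMulVec (w j) (w j))
    (hAnorm : ‖Matrix.toEuclideanCLM (𝕜 := ℂ) (A.map Complex.ofReal)‖ ≤ 2.5)
    (η : ℝ) (hη : 0 < η) (a b : Fin n) :
    ((∑ i, ∑ j, (η / ((lam i - mu j) ^ 2 + η ^ 2)) •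
        (Matrix.vecMulVec (v i) (v i) * Matrix.of (fun _ _ => (1 : ℝ)) *
          Matrix.vecMulVec (w j) (w j)) : Matrix (Fin n) (Fin n) ℝ)) a b
      = (1 / (2 * Real.pi)) *
          (rectIntegral η (fun z =>
            ((((A.map Complex.ofReal) - z • 1)⁻¹ * Matrix.of (fun _ _ => (1 : ℂ)) *
              ((B.map Complex.ofReal) - (z + (η : ℂ) * Complex.I) • 1)⁻¹ :
                Matrix (Fin n) (Fin n) ℂ)) a b)).re := by
  set J : Matrix (Fin n) (Fin n) ℝ := of fun _ _ => 1
  have hv₀ : ∀ i, v i ≠ 0 := fun i h => by simpa [h] using hv i i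
  have hlam : ∀ i, |lam i| < 3 := fun i =>
    ((abs_le_norm_toEuclideanCLM_of_mulVec_eq_smul (hv₀ i)
      (mulVec_eq_smul_of_eq_sum_smul_vecMulVec hv hAdec i)).trans hAnorm).trans_lt (by norm_num)
  have hmu : ∀ j, (mu j : ℂ) - η * I ∉ closedRect η := fun j h => by
    have him := (mem_reProdIm.mp h).2
    simp only [sub_im, ofReal_im, mul_im, ofReal_re, I_im, I_re, Set.mem_uIcc] at him
    rcases him with h | h <;> linarith [h.1]
  have hcontour : Set.EqOn
      (fun z => ((((A.map ofReal) - z • 1)⁻¹ * of (fun _ _ => (1 : ℂ)) *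
        ((B.map ofReal) - (z + (η : ℂ) * I) • 1)⁻¹ : Matrix (Fin n) (Fin n) ℂ)) a b)
      (fun z => ∑ i, ∑ j, ((vecMulVec (v i) (v i) * J * vecMulVec (w j) (w j)) a b : ℂ) *
        (((lam i : ℂ) - z)⁻¹ * (((mu j : ℂ) - η * I) - z)⁻¹)) (rectBoundary η) := by
    intro z hz
    dsimp only
    have hJ : of (fun _ _ => (1 : ℂ)) = J.map ofReal := by ext; simp [J]
    rw [hJ, inv_map_ofReal_sub_smul_one_mul_mul_apply hv hw hAdec hBdec
      (fun i h => ofReal_notMem_rectBoundary hη.ne' (hlam i) (h ▸ hz))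
      (fun j h => hmu j (by rw [h, add_sub_cancel_right]; exact rectBoundary_subset_closedRect hz))]
    simp only [sub_add_eq_sub_sub, sub_right_comm _ z]
  rw [rectIntegral_congr hcontour, rectIntegral_sum_sum_inv_ofReal_sub_mul_inv_sub hη hlam hmu]
  simp only [re_sum, re_ofReal_mul, re_two_pi_I_div_ofReal_sub_sub_mul_I, Matrix.sum_apply,
    Matrix.smul_apply, smul_eq_mul, Finset.mul_sum]
  refine Finset.sum_congr rfl fun i _ => Finset.sum_congr rfl fun j _ => ?_
  field_simp
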